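/- arXiv:2504.12965 — 2 statements merged into one kernel-verified Lean document; each statement's English description precedes it below -/
import Mathlib

section
/- Let Z be a topological space whose natural order admits all binary infima, and suppose every ultrafilter on Z has a smallest convergence point with respect to the natural order. Then the map sending an ultrafilter to its smallest convergence point is monotone, and is left adjoint to the principal ultrafilter embedding Z → UZ in the sense that σ(𝔵) ≤ z iff 𝔵 converges to z. -/
/-- If every ultrafilter on `Z` has a smallest convergence point (w.r.t. the
natural order), and the natural order admits binary infima, then the map `σ`
sending an ultrafilter to its smallest convergence point is monotone for the
natural order on ultrafilters, and `σ 𝔵 ≤ z ↔ 𝔵 ⇝ z`. -/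
theorem smallest_convergence_point_left_adjoint
    {Z : Type*} [TopologicalSpace Z]
    (le : Z → Z → Prop)
    (hle : ∀ x y, le x y ↔ ∀ V : Set Z, IsOpen V → y ∈ V → x ∈ V)
    (hinf : ∀ x y : Z, ∃ m, le m x ∧ le m y ∧ ∀ w, le w x → le w y → le w m)
    (σ : Ultrafilter Z → Z)
    (hσ : ∀ 𝔵 : Ultrafilter Z, (𝔵 : Filter Z) ≤ nhds (σ 𝔵) ∧
      ∀ z : Z, (𝔵 : Filter Z) ≤ nhds z → le (σ 𝔵) z) :
    (∀ 𝔵 𝔶 : Ultrafilter Z,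
        (∀ s : Set Z, IsOpen s → s ∈ 𝔶 → s ∈ 𝔵) → le (σ 𝔵) (σ 𝔶)) ∧
    (∀ (𝔵 : Ultrafilter Z) (z : Z), le (σ 𝔵) z ↔ (𝔵 : Filter Z) ≤ nhds z) := by
  constructor
  · intro 𝔵 𝔶 h
    apply (hσ 𝔵).2
    rw [le_nhds_iff]
    intro s hs hso
    exact h s hso (le_nhds_iff.mp (hσ 𝔶).1 s hs hso)
  · intro 𝔵 z
    constructor
    · intro h
      rw [le_nhds_iff]
      intro s hs hso
      have : σ 𝔵 ∈ s := (hle (σ 𝔵) z).mp h s hso hs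
      exact le_nhds_iff.mp (hσ 𝔵).1 s this hso
    · exact (hσ 𝔵).2 z
end

section
/- Let X be a complete lattice with the lower topology, and suppose the lower topology coincides with the lower Alexandroff topology (every up-closed set is closed). Then every codirected subset of X contains its infimum as a minimum; consequently x ≫ x for every x (every element is way above itself), and every decreasing sequence x₀ ≥ x₁ ≥ x₂ ≥ … in X is eventually constant. -/
/-- Auxiliary: in a set codirected under `≥`, any finite family of members has a
common lower bound in the set. -/
lemma aux_exists_lb {X : Type*} [Preorder X] {S : Set X} (hne : S.Nonempty)
    (hdir : DirectedOn (· ≥ ·) S) {F : Set X} (hF : F.Finite) (f : X → X)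
    (hf : ∀ a ∈ F, f a ∈ S) : ∃ z ∈ S, ∀ a ∈ F, z ≤ f a := by
  revert hf
  refine Set.Finite.induction_on (motive := fun F _ => (∀ a ∈ F, f a ∈ S) → ∃ z ∈ S, ∀ a ∈ F, z ≤ f a) F hF (fun _ => ⟨hne.choose, hne.choose_spec, by simp⟩) ?_
  intro a F' _ _ ih hf
  obtain ⟨z, hz, hzle⟩ := ih fun b hb => hf b (Set.mem_insert_of_mem _ hb)
  obtain ⟨w, hw, hwz, hwa⟩ := hdir z hz (f a) (hf a (Set.mem_insert _ _))
  refine ⟨w, hw, fun b hb => ?_⟩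
  rcases Set.mem_insert_iff.1 hb with rfl | hb
  · exact hwa
  · exact le_trans hwz (hzle b hb)

/-- Auxiliary: if every upper set is closed in the lower topology on a complete
lattice, then every codirected set contains its infimum. -/
lemma aux_sInf_mem {X : Type*} [CompleteLattice X]
    (h : ∀ S : Set X, IsUpperSet S → @IsClosed X (Topology.lower X) S) :
    ∀ S : Set X, S.Nonempty → DirectedOn (· ≥ ·) S → sInf S ∈ S := by
  intro S hne hdir
  letI : TopologicalSpace X := Topology.lower X
  haveI : Topology.IsLower X := ⟨rfl⟩
  by_contra hmem
  have hU : IsClosed (↑(upperClosure S) : Set X) := h _ (upperClosure S).upper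
  have hinf : sInf S ∈ (↑(upperClosure S) : Set X)ᶜ := by
    intro hc
    obtain ⟨a, haS, hale⟩ := hc
    exact hmem (le_antisymm hale (sInf_le haS) ▸ haS)
  obtain ⟨B, hB, hinfB, hBsub⟩ :=
    Topology.IsLower.isTopologicalBasis.exists_subset_of_mem_open hinf hU.isOpen_compl
  obtain ⟨F, hF, rfl⟩ := hB
  -- every element of `S` lies above some element of `F`
  have hcover : ∀ s ∈ S, ∃ a ∈ F, a ≤ s := by
    intro s hs
    by_contra hcon
    push_neg at hcon
    exact hBsub (fun hc => by obtain ⟨a, ha, hale⟩ := hc; exact hcon a ha hale)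
      (subset_upperClosure hs)
  -- some `a ∈ F` is bounded above by a cofinal subset of `S`
  have hcof : ∃ a ∈ F, ∀ s ∈ S, ∃ t ∈ S, t ≤ s ∧ a ≤ t := by
    by_contra hcon
    push_neg at hcon
    have hcon2 : ∀ a, ∃ s, s ∈ S ∧ (a ∈ F → ∀ t ∈ S, t ≤ s → ¬ a ≤ t) := by
      intro a
      by_cases haF : a ∈ F
      · obtain ⟨s, hsS, hs⟩ := hcon a haF
        exact ⟨s, hsS, fun _ t htS hts hat => (hs t htS hts hat).elim⟩
      · exact ⟨hne.choose, hne.choose_spec, fun hc => absurd hc haF⟩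
    choose sa hsaS hsa using hcon2
    obtain ⟨z, hzS, hzle⟩ := aux_exists_lb hne hdir hF sa fun a _ => hsaS a
    obtain ⟨a, haF, haz⟩ := hcover z hzS
    exact hsa a haF z hzS (hzle a haF) haz
  obtain ⟨a, haF, hcof⟩ := hcof
  -- then `a ≤ sInf S`, contradicting `sInf S ∉ upperClosure F`
  have hainf : a ≤ sInf S := by
    have h1 : a ≤ sInf {t | t ∈ S ∧ a ≤ t} := le_sInf fun t ht => ht.2
    refine le_trans h1 (le_sInf fun s hs => ?_)
    obtain ⟨t, htS, hts, hat⟩ := hcof s hs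
    exact sInf_le_of_le (⟨htS, hat⟩ : t ∈ {t | t ∈ S ∧ a ≤ t}) hts
  exact hinfB ⟨a, haF, hainf⟩

/-- If `X` is a complete lattice whose lower topology coincides with the lower
Alexandroff topology (every up-closed set is closed in the lower topology),
then every codirected subset contains its infimum as a minimum; consequently
every element is way above itself, and every decreasing sequence in `X` is
eventually constant. -/
theorem lower_eq_alexandroff_consequences
    {X : Type*} [CompleteLattice X]
    (h : ∀ S : Set X, IsUpperSet S → @IsClosed X (Topology.lower X) S) :
    letI wayAbove : X → X → Prop := fun x y =>
      ∀ S : Set X, S.Nonempty → DirectedOn (· ≥ ·) S → sInf S ≤ y →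
        ∃ s ∈ S, s ≤ x
    (∀ S : Set X, S.Nonempty → DirectedOn (· ≥ ·) S → sInf S ∈ S) ∧
    (∀ x : X, wayAbove x x) ∧
    (∀ f : ℕ → X, Antitone f → ∃ N : ℕ, ∀ n ≥ N, f n = f N) := by
  have key := aux_sInf_mem h
  refine ⟨key, fun x S hne hdir hle => ⟨sInf S, key S hne hdir, hle⟩, ?_⟩
  intro f hf
  have hne : (Set.range f).Nonempty := Set.range_nonempty f
  have hdir : DirectedOn (· ≥ ·) (Set.range f) := by
    rintro _ ⟨m, rfl⟩ _ ⟨n, rfl⟩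
    exact ⟨f (max m n), Set.mem_range_self _, hf (le_max_left m n), hf (le_max_right m n)⟩
  obtain ⟨N, hN⟩ := key _ hne hdir
  refine ⟨N, fun n hn => le_antisymm (hf hn) ?_⟩
  rw [hN]
  exact sInf_le (Set.mem_range_self n)
end
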